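/- arXiv:1810.05556 — 5 statements merged into one kernel-verified Lean document; each statement's English description precedes it below -/
import Mathlib

section
/- Let Γ = (V, m, τ) be a weak W-graph for the finite Coxeter system (W,S) with representation ρ on ℂV, and let A ⊆ Δ. Then the linear span of V(A,−) and the linear span of V(A,−) ∪ V(A,0) are both stable under ρ(g) for every g ∈ W(A); moreover, W(A) acts on the span of V(A,−) by the sign character, i.e., ρ(g)w = ε(g)·w for every g ∈ W(A) and every w in the span of V(A,−). -/
noncomputable section

/-- The standard parabolic subgroup `W(A)` of a Coxeter group, generated by the simple
reflections indexed by elements of `A`. -/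
def parabolicSubgroup {B W : Type*} [Group W] {M : CoxeterMatrix B}
    (cs : CoxeterSystem M W) (A : Set B) : Subgroup W :=
  Subgroup.closure (cs.simple '' A)

/-- For a weak W-graph `Γ = (V, m, τ)` of a finite Coxeter system with
representation `ρ` on `ℂV`, and `A ⊆ Δ`: the span of `V(A,−)` and the span of
`V(A,−) ∪ V(A,0)` are stable under `ρ(g)` for all `g ∈ W(A)`, and `W(A)` acts on the span of
`V(A,−)` by the sign character. -/
theorem weak_W_graph_flag {B W V : Type*} [Group W] [Finite W]
    [Fintype V] [DecidableEq V] [DecidableEq B]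
    {M : CoxeterMatrix B} (cs : CoxeterSystem M W)
    (m : V → V → ℂ) (τ : V → Finset B)
    (ρ : Representation ℂ W (V → ℂ))
    (hρ : ∀ (i : B) (v : V),
      ρ (cs.simple i) (Pi.single v 1) =
        if i ∈ τ v then -Pi.single v 1
        else Pi.single v 1 - ∑ u : V, (if i ∈ τ u then m u v • (Pi.single u 1 : V → ℂ) else 0))
    (ε : W →* ℂ) (hε : ∀ i : B, ε (cs.simple i) = -1)
    (A : Finset B) :
    (∀ g ∈ parabolicSubgroup cs (A : Set B),
        ∀ w ∈ Submodule.span ℂ ((fun v : V => Pi.single v (1 : ℂ)) '' {v | A ⊆ τ v}),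
          ρ g w = ε g • w) ∧
    (∀ g ∈ parabolicSubgroup cs (A : Set B),
        ∀ w ∈ Submodule.span ℂ ((fun v : V => Pi.single v (1 : ℂ)) '' {v | A ⊆ τ v}),
          ρ g w ∈ Submodule.span ℂ ((fun v : V => Pi.single v (1 : ℂ)) '' {v | A ⊆ τ v})) ∧
    (∀ g ∈ parabolicSubgroup cs (A : Set B),
        ∀ w ∈ Submodule.span ℂ ((fun v : V => Pi.single v (1 : ℂ)) ''
            ({v | A ⊆ τ v} ∪ {v | (↑A ∩ ↑(τ v) : Set B).Nonempty ∧ ¬ A ⊆ τ v})),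
          ρ g w ∈ Submodule.span ℂ ((fun v : V => Pi.single v (1 : ℂ)) ''
            ({v | A ⊆ τ v} ∪ {v | (↑A ∩ ↑(τ v) : Set B).Nonempty ∧ ¬ A ⊆ τ v}))) := by
  set S₁ := Submodule.span ℂ ((fun v : V => Pi.single v (1 : ℂ)) '' {v | A ⊆ τ v}) with hS₁
  set S₂ := Submodule.span ℂ ((fun v : V => Pi.single v (1 : ℂ)) ''
      ({v | A ⊆ τ v} ∪ {v | (↑A ∩ ↑(τ v) : Set B).Nonempty ∧ ¬ A ⊆ τ v})) with hS₂
  -- generator action on S₁ : eigenvalue -1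
  have gen1 : ∀ i ∈ A, ∀ w ∈ S₁, ρ (cs.simple i) w = -w := by
    intro i hi w hw
    have hker : S₁ ≤ LinearMap.ker (ρ (cs.simple i) + LinearMap.id) := by
      rw [hS₁, Submodule.span_le]
      rintro x ⟨v, hv, rfl⟩
      simp only [SetLike.mem_coe, LinearMap.mem_ker, LinearMap.add_apply, LinearMap.id_apply]
      rw [hρ, if_pos (hv hi)]
      abel
    have h := hker hw
    simp only [LinearMap.mem_ker, LinearMap.add_apply, LinearMap.id_apply] at h
    exact eq_neg_of_add_eq_zero_left h
  -- Part 1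
  have key1 : ∀ g ∈ parabolicSubgroup cs (A : Set B), ∀ w ∈ S₁, ρ g w = ε g • w := by
    intro g hg
    refine Subgroup.closure_induction
      (p := fun g _ => ∀ w ∈ S₁, ρ g w = ε g • w) ?_ ?_ ?_ ?_ hg
    · rintro x ⟨i, hi, rfl⟩ w hw
      rw [gen1 i hi w hw, hε, neg_smul, one_smul]
    · intro w hw; simp
    · intro x y hx hy hpx hpy w hw
      have hyw : ρ y w ∈ S₁ := by rw [hpy w hw]; exact S₁.smul_mem _ hw
      rw [map_mul, Module.End.mul_apply, hpy w hw, map_smul, hpx w hw, map_mul,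
        smul_smul, mul_comm]
    · intro x hx hpx w hw
      have hunit : ε x * ε x⁻¹ = 1 := by rw [← map_mul, mul_inv_cancel, map_one]
      have h1 : ρ x (ε x⁻¹ • w) = w := by
        rw [map_smul, hpx w hw, smul_smul, mul_comm, hunit, one_smul]
      calc ρ x⁻¹ w = ρ x⁻¹ (ρ x (ε x⁻¹ • w)) := by rw [h1]
        _ = ε x⁻¹ • w := by
            rw [← Module.End.mul_apply, ← map_mul, inv_mul_cancel, map_one, Module.End.one_apply]
  refine ⟨key1, ?_, ?_⟩
  · intro g hg w hw
    rw [key1 g hg w hw]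
    exact S₁.smul_mem _ hw
  -- Part 3
  · have gen2 : ∀ i ∈ A, ∀ w ∈ S₂, ρ (cs.simple i) w ∈ S₂ := by
      intro i hi w hw
      have hU : ∀ u : V, i ∈ τ u →
          (Pi.single u (1 : ℂ) : V → ℂ) ∈ S₂ := by
        intro u hiu
        apply Submodule.subset_span
        refine ⟨u, ?_, rfl⟩
        by_cases hAu : A ⊆ τ u
        · exact Or.inl hAu
        · exact Or.inr ⟨⟨i, by simpa using hi, by simpa using hiu⟩, hAu⟩
      induction hw using Submodule.span_induction with
      | mem x hx =>
        obtain ⟨v, hv, rfl⟩ := hx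
        by_cases hiv : i ∈ τ v
        · rw [hρ, if_pos hiv]
          exact S₂.neg_mem (hU v hiv)
        · rw [hρ, if_neg hiv]
          refine S₂.sub_mem (Submodule.subset_span ⟨v, hv, rfl⟩) (S₂.sum_mem ?_)
          intro u _
          by_cases hiu : i ∈ τ u
          · rw [if_pos hiu]; exact S₂.smul_mem _ (hU u hiu)
          · rw [if_neg hiu]; exact S₂.zero_mem
      | zero => simp
      | add x y hx hy hx' hy' => rw [map_add]; exact S₂.add_mem hx' hy'
      | smul c x hx hx' => rw [map_smul]; exact S₂.smul_mem _ hx'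
    intro g hg
    have : (∀ w ∈ S₂, ρ g w ∈ S₂) ∧ (∀ w ∈ S₂, ρ g⁻¹ w ∈ S₂) := by
      refine Subgroup.closure_induction
        (p := fun g _ => (∀ w ∈ S₂, ρ g w ∈ S₂) ∧ (∀ w ∈ S₂, ρ g⁻¹ w ∈ S₂)) ?_ ?_ ?_ ?_ hg
      · rintro x ⟨i, hi, rfl⟩
        have hi' : i ∈ A := by simpa using hi
        exact ⟨gen2 i hi', by rw [cs.inv_simple]; exact gen2 i hi'⟩
      · simp
      · intro x y hx hy hpx hpy
        constructor
        · intro w hw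
          rw [map_mul, Module.End.mul_apply]
          exact hpx.1 _ (hpy.1 w hw)
        · intro w hw
          rw [mul_inv_rev, map_mul, Module.End.mul_apply]
          exact hpy.2 _ (hpx.2 w hw)
      · intro x hx hpx
        exact ⟨hpx.2, by simpa using hpx.1⟩
    exact this.1
end
end

section
/- Let Γ = (V, m, τ) be a weak W-graph for the finite Coxeter system (W,S) with representation ρ on ℂV, and let A ⊆ Δ. Then the multiplicity of the trivial representation of W(A) in ℂV, that is, dim Hom_{W(A)}(triv, ℂV), equals the cardinality of V(A,+). In particular, ℂV contains a trivial subrepresentation for W(A) if and only if A ∩ τ(v) = ∅ for some v ∈ V. -/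
noncomputable section

/-- The submodule of vectors fixed by every element of the subgroup `H`; its dimension is
the multiplicity of the trivial representation of `H` (equivalently `dim Hom_H(triv, ·)`). -/
def invariantsSubmodule {W V' : Type*} [Group W] [AddCommGroup V'] [Module ℂ V']
    (ρ : Representation ℂ W V') (H : Subgroup W) : Submodule ℂ V' where
  carrier := {w | ∀ g ∈ H, ρ g w = w}
  add_mem' := by
    intro a b ha hb g hg
    simp only [map_add, ha g hg, hb g hg]
  zero_mem' := by
    intro g hg
    simp
  smul_mem' := by
    intro c a ha g hg
    rw [map_smul, ha g hg]

open Module LinearMap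

/-- the multiplicity of the trivial representation of `W(A)` in `ℂV` equals
`|V(A,+)|`; in particular `ℂV` contains a trivial subrepresentation of `W(A)` iff
`A ∩ τ(v) = ∅` for some `v ∈ V`. -/
theorem weak_W_graph_trivial_multiplicity {B W V : Type*} [Group W] [Finite W]
    [Fintype V] [DecidableEq V] [DecidableEq B]
    {M : CoxeterMatrix B} (cs : CoxeterSystem M W)
    (m : V → V → ℂ) (τ : V → Finset B)
    (ρ : Representation ℂ W (V → ℂ))
    (hρ : ∀ (i : B) (v : V),
      ρ (cs.simple i) (Pi.single v 1) =
        if i ∈ τ v then -Pi.single v 1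
        else Pi.single v 1 - ∑ u : V, (if i ∈ τ u then m u v • (Pi.single u 1 : V → ℂ) else 0))
    (A : Finset B) :
    Module.finrank ℂ (invariantsSubmodule ρ (parabolicSubgroup cs (A : Set B))) =
      Nat.card {v : V // A ∩ τ v = ∅} ∧
    ((∃ w ∈ invariantsSubmodule ρ (parabolicSubgroup cs (A : Set B)), w ≠ 0) ↔
      ∃ v : V, A ∩ τ v = ∅) := by
  classical
  set P := parabolicSubgroup cs (A : Set B) with hPdef
  haveI : Fintype P := Fintype.ofFinite _
  set Inv := invariantsSubmodule ρ P with hInvdef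
  -- Step 1: generators act trivially on coordinates in V(A,+)
  have hgen : ∀ i ∈ A, ∀ x : V → ℂ, ∀ v : V, A ∩ τ v = ∅ →
      (ρ (cs.simple i) x) v = x v := by
    intro i hi x v hv
    have hiv : i ∉ τ v := fun h =>
      Finset.eq_empty_iff_forall_notMem.mp hv i (Finset.mem_inter.mpr ⟨hi, h⟩)
    have key : (LinearMap.proj v).comp (ρ (cs.simple i) : (V → ℂ) →ₗ[ℂ] (V → ℂ)) =
        (LinearMap.proj v : (V → ℂ) →ₗ[ℂ] ℂ) := by
      apply Module.Basis.ext (Pi.basisFun ℂ V)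
      intro u
      simp only [Pi.basisFun_apply, LinearMap.comp_apply, LinearMap.proj_apply]
      rw [hρ i u]
      by_cases h : i ∈ τ u
      · have huv : u ≠ v := fun e => hiv (e ▸ h)
        rw [if_pos h, Pi.neg_apply, Pi.single_eq_of_ne huv.symm, neg_zero]
      · rw [if_neg h]
        have hsum : (∑ u' : V, (if i ∈ τ u' then m u' u • (Pi.single u' 1 : V → ℂ) else 0)) v
            = 0 := by
          rw [Finset.sum_apply]
          refine Finset.sum_eq_zero fun u' _ => ?_
          by_cases h' : i ∈ τ u'
          · have hne : u' ≠ v := fun e => hiv (e ▸ h')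
            rw [if_pos h', Pi.smul_apply, Pi.single_eq_of_ne hne.symm, smul_zero]
          · simp [if_neg h']
        simp [Pi.sub_apply, hsum]
    exact congrArg (fun f => f x) key
  -- Step 2: every element of P acts trivially on coordinates in V(A,+)
  have hfix : ∀ g ∈ P, ∀ x : V → ℂ, ∀ v : V, A ∩ τ v = ∅ → (ρ g x) v = x v := by
    let K : Subgroup W :=
      { carrier := {g | ∀ x : V → ℂ, ∀ v : V, A ∩ τ v = ∅ → (ρ g x) v = x v}
        one_mem' := by intro x v hv; simp
        mul_mem' := by
          intro a b ha hb x v hv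
          have : ρ (a * b) x = ρ a (ρ b x) := by rw [map_mul]; rfl
          rw [this, ha _ v hv, hb x v hv]
        inv_mem' := by
          intro a ha x v hv
          have h1 := ha (ρ a⁻¹ x) v hv
          have h2 : ρ a (ρ a⁻¹ x) = x := by
            rw [← Module.End.mul_apply, ← map_mul]
            simp
          rw [h2] at h1
          exact h1.symm }
    have hsub : cs.simple '' (A : Set B) ⊆ K := by
      rintro _ ⟨i, hi, rfl⟩
      exact fun x v hv => hgen i hi x v hv
    exact fun g hg => (Subgroup.closure_le K).mpr hsub hg
  -- basic facts about diagonal entries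
  have hdiag1 : ∀ g : P, ∀ v : V, A ∩ τ v = ∅ →
      (ρ (g : W) (Pi.single v 1)) v = 1 := by
    intro g v hv
    rw [hfix g g.2 _ v hv, Pi.single_eq_same]
  have hdiag0 : ∀ v : V, A ∩ τ v ≠ ∅ →
      (∑ g : P, (ρ (g : W) (Pi.single v 1)) v) = 0 := by
    intro v hv
    obtain ⟨i, hi⟩ := Finset.nonempty_iff_ne_empty.mpr hv
    obtain ⟨hiA, hiv⟩ := Finset.mem_inter.mp hi
    have hσ : cs.simple i ∈ P := Subgroup.subset_closure ⟨i, hiA, rfl⟩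
    set σ : P := (⟨cs.simple i, hσ⟩ : P) with hσdef
    set f : P → ℂ := fun g => (ρ (g : W) (Pi.single v 1)) v with hfdef
    have hkey : ∀ g : P, f (g * σ) = -f g := by
      intro g
      have h1 : ρ ((g : W) * cs.simple i) (Pi.single v 1)
          = ρ (g : W) (ρ (cs.simple i) (Pi.single v 1)) := by
        rw [map_mul]; rfl
      have h2 : ρ (cs.simple i) (Pi.single v 1) = -Pi.single v 1 := by
        rw [hρ, if_pos hiv]
      simp only [hfdef, Subgroup.coe_mul, hσdef, h1, h2, map_neg, Pi.neg_apply]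
    have hsum : ∑ g : P, f g = -∑ g : P, f g := by
      conv_lhs => rw [← Equiv.sum_comp (Equiv.mulRight σ) f]
      simp only [Equiv.coe_mulRight, hkey, Finset.sum_neg_distrib]
    have : (∑ g : P, f g) + (∑ g : P, f g) = 0 := by
      nth_rewrite 1 [hsum]; ring
    exact add_self_eq_zero.mp this
  -- the averaging operator
  set n : ℕ := Fintype.card P with hndef
  have hn : (n : ℂ) ≠ 0 := Nat.cast_ne_zero.mpr Fintype.card_ne_zero
  set Q : (V → ℂ) →ₗ[ℂ] (V → ℂ) :=
    (n : ℂ)⁻¹ • ∑ g : P, (ρ (g : W) : (V → ℂ) →ₗ[ℂ] (V → ℂ)) with hQdef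
  have hQapp : ∀ x : V → ℂ, Q x = (n : ℂ)⁻¹ • ∑ g : P, ρ (g : W) x := by
    intro x
    simp only [hQdef, LinearMap.smul_apply, LinearMap.sum_apply]
  -- Q is a projection onto the invariants
  have hQmem : ∀ x : V → ℂ, Q x ∈ Inv := by
    intro x h hh
    rw [hQapp, map_smul, map_sum]
    congr 1
    have : ∀ g : P, ρ h (ρ (g : W) x) = ρ (((⟨h, hh⟩ : P) * g : P) : W) x := by
      intro g
      rw [Subgroup.coe_mul, map_mul]
      rfl
    rw [Finset.sum_congr rfl fun g _ => this g]
    exact Equiv.sum_comp (Equiv.mulLeft (⟨h, hh⟩ : P)) (fun g : P => ρ (g : W) x)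
  have hQid : ∀ x ∈ Inv, Q x = x := by
    intro x hx
    rw [hQapp]
    have : ∀ g : P, ρ (g : W) x = x := fun g => hx (g : W) g.2
    rw [Finset.sum_congr rfl fun g _ => this g, Finset.sum_const, Finset.card_univ,
      ← hndef, ← Nat.cast_smul_eq_nsmul ℂ, smul_smul, inv_mul_cancel₀ hn, one_smul]
  have hproj : LinearMap.IsProj Inv Q := ⟨hQmem, hQid⟩
  -- trace formula
  have htrace : ∀ f : (V → ℂ) →ₗ[ℂ] (V → ℂ),
      LinearMap.trace ℂ (V → ℂ) f = ∑ v : V, f (Pi.single v 1) v := by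
    intro f
    rw [LinearMap.trace_eq_matrix_trace ℂ (Pi.basisFun ℂ V), Matrix.trace]
    refine Finset.sum_congr rfl fun v _ => ?_
    simp [Matrix.diag, LinearMap.toMatrix_apply]
  have htrQ : LinearMap.trace ℂ (V → ℂ) Q
      = (Fintype.card {v : V // A ∩ τ v = ∅} : ℂ) := by
    rw [hQdef, map_smul, map_sum]
    have h1 : ∀ g : P, LinearMap.trace ℂ (V → ℂ) (ρ (g : W) : (V → ℂ) →ₗ[ℂ] (V → ℂ))
        = ∑ v : V, (ρ (g : W) (Pi.single v 1)) v := fun g => htrace _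
    rw [Finset.sum_congr rfl fun g _ => h1 g, Finset.sum_comm]
    have h2 : ∀ v : V, (∑ g : P, (ρ (g : W) (Pi.single v 1)) v)
        = if A ∩ τ v = ∅ then (n : ℂ) else 0 := by
      intro v
      by_cases hv : A ∩ τ v = ∅
      · rw [if_pos hv, Finset.sum_congr rfl fun g _ => hdiag1 g v hv,
          Finset.sum_const, Finset.card_univ, ← hndef, nsmul_eq_mul, mul_one]
      · rw [if_neg hv, hdiag0 v hv]
    rw [Finset.sum_congr rfl fun v _ => h2 v, ← Finset.sum_filter, Finset.sum_const,
      Fintype.card_subtype, nsmul_eq_mul, smul_eq_mul, mul_comm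
      ((Finset.filter (fun v => A ∩ τ v = ∅) Finset.univ).card : ℂ) (n : ℂ), ← mul_assoc,
      inv_mul_cancel₀ hn, one_mul]
  have hdim : Module.finrank ℂ Inv = Fintype.card {v : V // A ∩ τ v = ∅} := by
    have := hproj.trace
    rw [htrQ] at this
    exact_mod_cast this.symm
  have h1 : Module.finrank ℂ Inv = Nat.card {v : V // A ∩ τ v = ∅} := by
    rw [hdim, Nat.card_eq_fintype_card]
  refine ⟨h1, ?_⟩
  constructor
  · rintro ⟨w, hw, hw0⟩
    have : 0 < Module.finrank ℂ Inv := by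
      rw [Module.finrank_pos_iff_exists_ne_zero]
      exact ⟨⟨w, hw⟩, fun h => hw0 (by simpa using congrArg Subtype.val h)⟩
    rw [h1, Nat.card_eq_fintype_card, Fintype.card_pos_iff] at this
    obtain ⟨⟨v, hv⟩⟩ := this
    exact ⟨v, hv⟩
  · rintro ⟨v, hv⟩
    have : 0 < Module.finrank ℂ Inv := by
      rw [h1, Nat.card_eq_fintype_card, Fintype.card_pos_iff]
      exact ⟨⟨v, hv⟩⟩
    rw [Module.finrank_pos_iff_exists_ne_zero] at this
    obtain ⟨⟨w, hw⟩, hw0⟩ := this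
    exact ⟨w, hw, fun h => hw0 (Subtype.ext h)⟩

end
end

section
/- Let Γ = (V, m, τ) be a weak W-graph for the finite Coxeter system (W,S) with representation ρ on ℂV, and let A ⊆ Δ. Then the image of the operator R(A) on ℂV is precisely the linear span of V(A,−). -/
noncomputable section

/-- The signed averaging operator `R(A) = |W(A)|⁻¹ ∑_{g ∈ W(A)} ε(g) ρ(g)`. -/
def Rop {B W V : Type*} [Group W] {M : CoxeterMatrix B} (cs : CoxeterSystem M W)
    (ρ : Representation ℂ W (V → ℂ)) (ε : W →* ℂ) (A : Set B) :
    (V → ℂ) →ₗ[ℂ] (V → ℂ) :=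
  (Nat.card (parabolicSubgroup cs A) : ℂ)⁻¹ •
    ∑ᶠ g : (parabolicSubgroup cs A), ε (g : W) • ρ (g : W)

/-!
For `v ∈ V(A,−)` every simple reflection of `W(A)` acts on `v` by `-1 = ε(s)`, so `W(A)` acts on
`v` through `ε`; as `ε² = 1`, the signed average `R(A)` fixes `v`. For `v ∉ V(A,−)` pick `α ∈ A`
with `α ∉ τ(v)`: the defining formula of a weak `W`-graph shows that `s_α` does not change the
`v`-coordinate of any vector, while `ε(s_α) = -1`, so reindexing the sum defining `R(A)` by
`g ↦ s_α g` shows that the `v`-coordinate of `R(A) x` equals its own negative.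
-/

theorem CoxeterSystem.mul_self_eq_one_of_apply_simple {B W R : Type*} [Group W] [CommRing R]
    {M : CoxeterMatrix B} (cs : CoxeterSystem M W) {χ : W →* R}
    (hχ : ∀ i, χ (cs.simple i) = -1) (g : W) : χ g * χ g = 1 :=
  DFunLike.congr_fun (cs.ext_simple (φ₁ := χ * χ) (φ₂ := 1) fun i ↦ by simp [hχ]) g

namespace Representation

section CommSemiring

variable {k G M : Type*} [CommSemiring k] [Group G] [AddCommMonoid M] [Module k M]
  (ρ : Representation k G M) (χ : G →* k)

theorem apply_eq_smul_of_mem_closure {S : Set G} {x : M} (hS : ∀ s ∈ S, ρ s x = χ s • x)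
    {g : G} (hg : g ∈ Subgroup.closure S) : ρ g x = χ g • x := by
  induction hg using Subgroup.closure_induction with
  | mem s hs => exact hS s hs
  | one => simp
  | mul g h _ _ hg hh =>
    rw [map_mul, Module.End.mul_apply, hh, map_smul, hg, smul_smul, mul_comm, ← map_mul]
  | inv g _ hg =>
    calc ρ g⁻¹ x = (χ g⁻¹ * χ g) • ρ g⁻¹ x := by
          rw [← map_mul, inv_mul_cancel, map_one, one_smul]
      _ = χ g⁻¹ • ρ g⁻¹ (ρ g x) := by rw [hg, map_smul, smul_smul]
      _ = χ g⁻¹ • x := by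
          rw [← Module.End.mul_apply, ← map_mul, inv_mul_cancel, map_one, Module.End.one_apply]

theorem sum_smul_apply_of_apply_eq_smul (H : Subgroup G) [Fintype H] {x : M}
    (hx : ∀ g ∈ H, ρ g x = χ g • x) (hχ : ∀ g ∈ H, χ g * χ g = 1) :
    ∑ g : H, χ g • ρ g x = Fintype.card H • x := by
  simp [hx _ (SetLike.coe_mem _), smul_smul, hχ _ (SetLike.coe_mem _)]

end CommSemiring

theorem apply_sum_smul_eq_zero {k G M N : Type*} [CommRing k] [Group G] [AddCommGroup M]
    [Module k M] [AddCommGroup N] [Module k N] [IsAddTorsionFree N]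
    (ρ : Representation k G M) (χ : G →* k) (H : Subgroup G) [Fintype H] {s : G} (hs : s ∈ H)
    (hχs : χ s = -1) {f : M →ₗ[k] N} (hf : f ∘ₗ ρ s = f) (x : M) :
    f (∑ g : H, χ g • ρ g x) = 0 := by
  refine self_eq_neg.mp ?_
  calc f (∑ g : H, χ g • ρ g x)
        = ∑ g : H, χ (⟨s, hs⟩ * g : H) • f (ρ (⟨s, hs⟩ * g : H) x) := by
        rw [map_sum]
        exact (Equiv.sum_comp (Equiv.mulLeft ⟨s, hs⟩) fun g : H ↦ f (χ g • ρ g x)).symm.trans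
          (by simp)
    _ = -f (∑ g : H, χ g • ρ g x) := by
        simp [hχs, ← LinearMap.comp_apply f (ρ s), hf]

end Representation

theorem Pi.range_eq_span_single_of_apply_single {k V : Type*} [Semiring k] [Fintype V]
    [DecidableEq V] (f : (V → k) →ₗ[k] (V → k)) (S : Set V) (hf : ∀ x, ∀ v ∉ S, f x v = 0)
    (hS : ∀ v ∈ S, f (Pi.single v 1) = Pi.single v 1) :
    LinearMap.range f = Submodule.span k ((fun v ↦ Pi.single v (1 : k)) '' S) := by
  have hbasis : (fun v ↦ Pi.single v (1 : k)) '' S = Pi.basisFun k V '' S := by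
    simp [Pi.basisFun_apply]
  apply le_antisymm
  · rintro _ ⟨x, rfl⟩
    rw [hbasis, Module.Basis.mem_span_image]
    intro v hv
    by_contra hvS
    simp [hf x v hvS] at hv
  · rw [Submodule.span_le]
    rintro _ ⟨v, hv, rfl⟩
    exact ⟨_, hS v hv⟩

theorem wGraphReflection_apply_of_notMem {k V B : Type*} [CommRing k] [Fintype V]
    [DecidableEq V] [DecidableEq B] (m : V → V → k) (τ : V → Finset B) {i : B}
    (T : (V → k) →ₗ[k] (V → k))
    (hT : ∀ u, T (Pi.single u 1) = if i ∈ τ u then -Pi.single u 1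
        else Pi.single u 1 - ∑ w : V, (if i ∈ τ w then m w u • (Pi.single w 1 : V → k) else 0))
    {v : V} (hv : i ∉ τ v) (y : V → k) : T y v = y v := by
  suffices LinearMap.proj v ∘ₗ T = LinearMap.proj v from LinearMap.congr_fun this y
  refine (Pi.basisFun k V).ext fun u ↦ ?_
  by_cases hu : i ∈ τ u
  · have : v ≠ u := by rintro rfl; exact hv hu
    simp [hT, hu, this]
  · have hsum : ∀ w, (if i ∈ τ w then m w u • (Pi.single w 1 : V → k) else 0) v = 0 := by
      intro w
      split_ifs with hw
      · have : v ≠ w := by rintro rfl; exact hv hw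
        simp [this]
      · rfl
    simp [hT, hu, Finset.sum_apply, hsum]

section Rop

variable {B W V : Type*} [Group W] {M : CoxeterMatrix B} (cs : CoxeterSystem M W)
  (ρ : Representation ℂ W (V → ℂ)) {ε : W →* ℂ} (A : Set B)

theorem Rop_apply [Fintype (parabolicSubgroup cs A)] (x : V → ℂ) :
    Rop cs ρ ε A x = (Fintype.card (parabolicSubgroup cs A) : ℂ)⁻¹ •
      ∑ g : parabolicSubgroup cs A, ε g • ρ g x := by
  simp [Rop, finsum_eq_sum_of_fintype, Nat.card_eq_fintype_card, LinearMap.sum_apply]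

variable [Finite (parabolicSubgroup cs A)] (hε : ∀ i, ε (cs.simple i) = -1)
include hε

theorem Rop_apply_eq_self {x : V → ℂ} (hx : ∀ i ∈ A, ρ (cs.simple i) x = -x) :
    Rop cs ρ ε A x = x := by
  have := Fintype.ofFinite (parabolicSubgroup cs A)
  have hsign : ∀ g ∈ parabolicSubgroup cs A, ρ g x = ε g • x :=
    fun g ↦ ρ.apply_eq_smul_of_mem_closure ε <| by
      rintro _ ⟨i, hi, rfl⟩
      rw [hx i hi, hε, neg_one_smul]
  rw [Rop_apply, ρ.sum_smul_apply_of_apply_eq_smul ε _ hsign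
    fun g _ ↦ cs.mul_self_eq_one_of_apply_simple hε g, ← Nat.cast_smul_eq_nsmul ℂ, smul_smul,
    inv_mul_cancel₀ (Nat.cast_ne_zero.mpr Fintype.card_ne_zero), one_smul]

theorem Rop_apply_apply_eq_zero {i : B} (hi : i ∈ A) {v : V}
    (hv : ∀ y, ρ (cs.simple i) y v = y v) (x : V → ℂ) : Rop cs ρ ε A x v = 0 := by
  have := Fintype.ofFinite (parabolicSubgroup cs A)
  have hs : cs.simple i ∈ parabolicSubgroup cs A := Subgroup.subset_closure ⟨i, hi, rfl⟩
  have hsum :=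
    ρ.apply_sum_smul_eq_zero ε _ hs (hε i) (f := LinearMap.proj v) (LinearMap.ext hv) x
  rw [LinearMap.proj_apply] at hsum
  rw [Rop_apply, Pi.smul_apply, hsum, smul_zero]

end Rop

/-- the image of `R(A)` on `ℂV` is precisely the span of `V(A,−)`. -/
theorem weak_W_graph_range_R {B W V : Type*} [Group W] [Finite W]
    [Fintype V] [DecidableEq V] [DecidableEq B]
    {M : CoxeterMatrix B} (cs : CoxeterSystem M W)
    (m : V → V → ℂ) (τ : V → Finset B)
    (ρ : Representation ℂ W (V → ℂ))
    (hρ : ∀ (i : B) (v : V),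
      ρ (cs.simple i) (Pi.single v 1) =
        if i ∈ τ v then -Pi.single v 1
        else Pi.single v 1 - ∑ u : V, (if i ∈ τ u then m u v • (Pi.single u 1 : V → ℂ) else 0))
    (ε : W →* ℂ) (hε : ∀ i : B, ε (cs.simple i) = -1)
    (A : Finset B) :
    LinearMap.range (Rop cs ρ ε (A : Set B)) =
      Submodule.span ℂ ((fun v : V => Pi.single v (1 : ℂ)) '' {v | A ⊆ τ v}) := by
  refine Pi.range_eq_span_single_of_apply_single _ _ (fun x v hv ↦ ?_) fun v hv ↦ ?_
  · obtain ⟨i, hiA, hiv⟩ := Finset.not_subset.mp hv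
    exact Rop_apply_apply_eq_zero cs ρ _ hε hiA
      (wGraphReflection_apply_of_notMem m τ _ (hρ i) hiv) x
  · exact Rop_apply_eq_self cs ρ _ hε fun i hi ↦ by rw [hρ, if_pos (hv hi)]

end
end

section
/- Let Γ = (V, m, τ) be a weak W-graph for the finite Coxeter system (W,S) with representation ρ on ℂV, and let A ⊆ Δ. Then the multiplicity of the sign representation of W(A) in ℂV, i.e., the dimension of the subspace {w ∈ ℂV : ρ(g)w = ε(g)·w for all g ∈ W(A)}, equals the cardinality of V(A,−). In particular, ℂV contains a sign subrepresentation for W(A) if and only if A ⊆ τ(v) for some v ∈ V. -/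
noncomputable section

/-- The sign-isotypic submodule `{w | ρ(g) w = ε(g) • w for all g ∈ H}`; its dimension is
the multiplicity of the sign representation of `H`. -/
def signIsotypic {W V' : Type*} [Group W] [AddCommGroup V'] [Module ℂ V']
    (ρ : Representation ℂ W V') (H : Subgroup W) (ε : W → ℂ) : Submodule ℂ V' where
  carrier := {w | ∀ g ∈ H, ρ g w = ε g • w}
  add_mem' := by
    intro a b ha hb g hg
    simp only [map_add, ha g hg, hb g hg, smul_add]
  zero_mem' := by
    intro g hg
    simp
  smul_mem' := by
    intro c a ha g hg
    rw [map_smul, ha g hg, smul_comm]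

/-- the multiplicity of the sign representation of `W(A)` in `ℂV` equals
`|V(A,−)|`; in particular `ℂV` contains a sign subrepresentation of `W(A)` iff
`A ⊆ τ(v)` for some `v ∈ V`. -/
theorem weak_W_graph_sign_multiplicity {B W V : Type*} [Group W] [Finite W]
    [Fintype V] [DecidableEq V] [DecidableEq B]
    {M : CoxeterMatrix B} (cs : CoxeterSystem M W)
    (m : V → V → ℂ) (τ : V → Finset B)
    (ρ : Representation ℂ W (V → ℂ))
    (hρ : ∀ (i : B) (v : V),
      ρ (cs.simple i) (Pi.single v 1) =
        if i ∈ τ v then -Pi.single v 1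
        else Pi.single v 1 - ∑ u : V, (if i ∈ τ u then m u v • (Pi.single u 1 : V → ℂ) else 0))
    (ε : W →* ℂ) (hε : ∀ i : B, ε (cs.simple i) = -1)
    (A : Finset B) :
    Module.finrank ℂ (signIsotypic ρ (parabolicSubgroup cs (A : Set B)) ε) =
      Nat.card {v : V // A ⊆ τ v} ∧
    ((∃ w ∈ signIsotypic ρ (parabolicSubgroup cs (A : Set B)) ε, w ≠ 0) ↔
      ∃ v : V, A ⊆ τ v) := by
  classical
  set S := signIsotypic ρ (parabolicSubgroup cs (A : Set B)) ε with hSdef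
  -- The support submodule
  let T : Submodule ℂ (V → ℂ) :=
    { carrier := {w | ∀ v : V, ¬ A ⊆ τ v → w v = 0}
      add_mem' := by intro a b ha hb v hv; simp only [Pi.add_apply, ha v hv, hb v hv, add_zero]
      zero_mem' := by intro v hv; rfl
      smul_mem' := by intro c a ha v hv; simp only [Pi.smul_apply, ha v hv, smul_zero] }
  have hmemT : ∀ w : V → ℂ, w ∈ T ↔ ∀ v : V, ¬ A ⊆ τ v → w v = 0 := fun w => Iff.rfl
  have hsum : ∀ w : V → ℂ, w = ∑ v : V, w v • (Pi.single v 1 : V → ℂ) := by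
    intro w
    funext x
    rw [Finset.sum_apply]
    simp [Pi.single_apply]
  have expand : ∀ (g : W) (w : V → ℂ), ρ g w = ∑ v : V, w v • ρ g (Pi.single v 1) := by
    intro g w
    conv_lhs => rw [hsum w]
    rw [map_sum]
    exact Finset.sum_congr rfl fun v _ => (ρ g).map_smul (w v) _
  -- generators act as -1 on T
  have hgen : ∀ i ∈ A, ∀ w ∈ T, ρ (cs.simple i) w = -w := by
    intro i hi w hw
    rw [expand]
    have : (-w : V → ℂ) = ∑ v : V, -(w v • (Pi.single v 1 : V → ℂ)) := by
      rw [Finset.sum_neg_distrib, ← hsum w]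
    rw [this]
    refine Finset.sum_congr rfl fun v _ => ?_
    by_cases hv : w v = 0
    · simp [hv]
    · have hAv : A ⊆ τ v := by
        by_contra h
        exact hv (hw v h)
      have hiv : i ∈ τ v := hAv hi
      rw [hρ i v, if_pos hiv, smul_neg]
  -- T ⊆ S
  have hTS : T ≤ S := by
    intro w hw g hg
    induction hg using Subgroup.closure_induction with
    | mem x hx =>
      obtain ⟨i, hi, rfl⟩ := hx
      rw [hgen i hi w hw, hε i, neg_one_smul]
    | one => simp
    | mul x y hx hy ihx ihy =>
      rw [map_mul, Module.End.mul_apply, ihy, map_smul, ihx, map_mul, smul_smul, mul_comm]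
    | inv x hx ih =>
      have hx1 : ε x * ε x⁻¹ = 1 := by rw [← map_mul, mul_inv_cancel, map_one]
      have hne : ε x ≠ 0 := left_ne_zero_of_mul_eq_one hx1
      have h1 : ρ x⁻¹ (ρ x w) = w := by
        rw [← Module.End.mul_apply, ← map_mul, inv_mul_cancel, map_one, Module.End.one_apply]
      rw [ih, map_smul] at h1
      have h2 : ε x⁻¹ = (ε x)⁻¹ :=
        eq_inv_of_mul_eq_one_left (by rw [← map_mul, inv_mul_cancel, map_one])
      rw [h2, eq_inv_smul_iff₀ hne, h1]
  -- S ⊆ T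
  have hST : S ≤ T := by
    intro w hw v hv
    obtain ⟨i, hi, hiv⟩ := Finset.not_subset.mp hv
    have hmem : cs.simple i ∈ parabolicSubgroup cs (A : Set B) :=
      Subgroup.subset_closure ⟨i, hi, rfl⟩
    have heq : ρ (cs.simple i) w = -w := by
      rw [hw (cs.simple i) hmem, hε i, neg_one_smul]
    have hval : (ρ (cs.simple i) w) v = w v := by
      rw [expand]
      rw [Finset.sum_apply]
      have : ∀ u : V, (w u • ρ (cs.simple i) (Pi.single u 1)) v =
          w u * (Pi.single u 1 : V → ℂ) v := by
        intro u
        rw [Pi.smul_apply, smul_eq_mul, hρ i u]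
        by_cases hu : i ∈ τ u
        · rw [if_pos hu]
          have huv : u ≠ v := fun h => hiv (h ▸ hu)
          simp [Pi.single_eq_of_ne (Ne.symm huv)]
        · rw [if_neg hu, Pi.sub_apply, Finset.sum_apply]
          have hz : ∀ u' : V,
              ((if i ∈ τ u' then m u' u • (Pi.single u' 1 : V → ℂ) else 0)) v = 0 := by
            intro u'
            by_cases hu' : i ∈ τ u'
            · have : u' ≠ v := fun h => hiv (h ▸ hu')
              rw [if_pos hu', Pi.smul_apply, Pi.single_eq_of_ne (Ne.symm this), smul_zero]
            · rw [if_neg hu']; rfl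
          rw [Finset.sum_congr rfl fun u' _ => hz u', Finset.sum_const_zero, sub_zero]
      rw [Finset.sum_congr rfl fun u _ => this u]
      simp [Pi.single_apply]
    rw [heq, Pi.neg_apply] at hval
    have : (2 : ℂ) * w v = 0 := by ring_nf; linear_combination -hval
    exact (mul_eq_zero.mp this).resolve_left two_ne_zero
  have hS_eq : S = T := le_antisymm hST hTS
  constructor
  · -- dimension count
    let e : T ≃ₗ[ℂ] ({v : V // A ⊆ τ v} → ℂ) :=
      { toFun := fun w => fun v => (w : V → ℂ) v.1
        map_add' := fun a b => rfl
        map_smul' := fun c a => rfl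
        invFun := fun f => ⟨fun v => if h : A ⊆ τ v then f ⟨v, h⟩ else 0,
          fun v hv => dif_neg hv⟩
        left_inv := by
          intro w
          ext v
          dsimp only
          split_ifs with h
          · rfl
          · exact (w.2 v h).symm
        right_inv := by
          intro f
          ext v
          exact dif_pos v.2 }
    rw [hS_eq, e.finrank_eq, Module.finrank_fintype_fun_eq_card, Nat.card_eq_fintype_card]
  · rw [hS_eq]
    constructor
    · rintro ⟨w, hw, hw0⟩
      obtain ⟨v, hv⟩ := Function.ne_iff.mp hw0
      refine ⟨v, ?_⟩
      by_contra h
      exact hv (hw v h)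
    · rintro ⟨v, hv⟩
      refine ⟨Pi.single v 1, ?_, ?_⟩
      · intro v' hv'
        have : v' ≠ v := fun h => hv' (h ▸ hv)
        exact Pi.single_eq_of_ne this 1
      · intro h
        have := congrFun h v
        rw [Pi.single_eq_same] at this
        exact one_ne_zero this

end
end

section
/- Let Γ₁ = (V₁, m₁, τ₁) and Γ₂ = (V₂, m₂, τ₂) be weak W-graphs for the same finite Coxeter system (W,S) such that the associated representations of W on ℂV₁ and ℂV₂ are isomorphic. Then Γ₁ and Γ₂ have the same τ-invariant, i.e., {τ₁(v) : v ∈ V₁} = {τ₂(v) : v ∈ V₂} as collections of subsets of Δ. -/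
noncomputable section

set_option linter.unusedSectionVars false

namespace WGraphAux

variable {B W V : Type*} [Group W] [Fintype V] [DecidableEq V] [DecidableEq B]

/-- Coordinate subspace of functions supported on `{v | T ⊆ τ v}`. -/
def Fsp (τ : V → Finset B) (T : Finset B) : Submodule ℂ (V → ℂ) where
  carrier := {w | ∀ v, ¬ T ⊆ τ v → w v = 0}
  add_mem' := by intro a b ha hb v hv; simp only [Pi.add_apply, ha v hv, hb v hv, add_zero]
  zero_mem' := by intro v hv; rfl
  smul_mem' := by intro c a ha v hv; simp only [Pi.smul_apply, ha v hv, smul_zero]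

theorem mem_Fsp {τ : V → Finset B} {T : Finset B} {w : V → ℂ} :
    w ∈ Fsp τ T ↔ ∀ v, ¬ T ⊆ τ v → w v = 0 := Iff.rfl

theorem eigchar {M : CoxeterMatrix B} (cs : CoxeterSystem M W)
    (m : V → V → ℂ) (τ : V → Finset B) (ρ : Representation ℂ W (V → ℂ))
    (hρ : ∀ (i : B) (v : V),
      ρ (cs.simple i) (Pi.single v 1) =
        if i ∈ τ v then -Pi.single v 1
        else Pi.single v 1 - ∑ u : V, (if i ∈ τ u then m u v • (Pi.single u 1 : V → ℂ) else 0))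
    (i : B) (w : V → ℂ) :
    ρ (cs.simple i) w = -w ↔ ∀ v, i ∉ τ v → w v = 0 := by
  have hsingle : ∀ u : V, (Pi.single u (w u) : V → ℂ) = w u • (Pi.single u 1 : V → ℂ) := by
    intro u; ext v'
    by_cases h : v' = u <;> simp [Pi.single_apply, h]
  have hdecomp : w = ∑ u : V, w u • (Pi.single u 1 : V → ℂ) := by
    conv_lhs => rw [← Finset.univ_sum_single w]
    exact Finset.sum_congr rfl fun u _ => hsingle u
  have hval : ρ (cs.simple i) w = ∑ u : V, w u • ρ (cs.simple i) (Pi.single u 1) := by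
    conv_lhs => rw [hdecomp]
    rw [map_sum]
    exact Finset.sum_congr rfl fun u _ => map_smul _ _ _
  constructor
  · intro h v hv
    have hcoord : (ρ (cs.simple i) w) v = w v := by
      rw [hval]
      rw [Finset.sum_apply]
      have hterm : ∀ u : V, (w u • ρ (cs.simple i) (Pi.single u 1)) v
          = if v = u then w u else 0 := by
        intro u
        rw [hρ i u]
        by_cases hu : i ∈ τ u
        · rw [if_pos hu]
          have hne : v ≠ u := fun h' => hv (h' ▸ hu)
          simp [Pi.single_apply, hne]
        · rw [if_neg hu]
          have hsum : (∑ u' : V, (if i ∈ τ u' then m u' u • (Pi.single u' 1 : V → ℂ) else 0)) v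
              = 0 := by
            rw [Finset.sum_apply]
            apply Finset.sum_eq_zero
            intro u' _
            by_cases hu' : i ∈ τ u'
            · have hne : v ≠ u' := fun h' => hv (h' ▸ hu')
              simp [hu', Pi.single_apply, hne]
            · simp [hu']
          simp only [Pi.smul_apply, Pi.sub_apply, hsum, sub_zero, smul_eq_mul]
          by_cases h' : v = u <;> simp [Pi.single_apply, h']
      rw [Finset.sum_congr rfl fun u _ => hterm u]
      simp
    rw [h] at hcoord
    have : -(w v) = w v := hcoord
    linear_combination (-1/2 : ℂ) * this
  · intro h
    rw [hval]
    have hterm : ∀ u : V, w u • ρ (cs.simple i) (Pi.single u 1)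
        = -(w u • (Pi.single u 1 : V → ℂ)) := by
      intro u
      by_cases hu : i ∈ τ u
      · rw [hρ i u, if_pos hu, smul_neg]
      · rw [h u hu]; simp
    rw [Finset.sum_congr rfl fun u _ => hterm u, Finset.sum_neg_distrib, ← hdecomp]

theorem main_half {B W V₁ V₂ : Type*} [Group W]
    [Fintype V₁] [DecidableEq V₁] [Fintype V₂] [DecidableEq V₂] [DecidableEq B]
    {M : CoxeterMatrix B} (cs : CoxeterSystem M W)
    (m₁ : V₁ → V₁ → ℂ) (τ₁ : V₁ → Finset B)
    (ρ₁ : Representation ℂ W (V₁ → ℂ))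
    (hρ₁ : ∀ (i : B) (v : V₁),
      ρ₁ (cs.simple i) (Pi.single v 1) =
        if i ∈ τ₁ v then -Pi.single v 1
        else Pi.single v 1 - ∑ u : V₁, (if i ∈ τ₁ u then m₁ u v • (Pi.single u 1 : V₁ → ℂ) else 0))
    (m₂ : V₂ → V₂ → ℂ) (τ₂ : V₂ → Finset B)
    (ρ₂ : Representation ℂ W (V₂ → ℂ))
    (hρ₂ : ∀ (i : B) (v : V₂),
      ρ₂ (cs.simple i) (Pi.single v 1) =
        if i ∈ τ₂ v then -Pi.single v 1
        else Pi.single v 1 - ∑ u : V₂, (if i ∈ τ₂ u then m₂ u v • (Pi.single u 1 : V₂ → ℂ) else 0))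
    (e : (V₁ → ℂ) ≃ₗ[ℂ] (V₂ → ℂ))
    (he : ∀ (g : W) (w : V₁ → ℂ), e (ρ₁ g w) = ρ₂ g (e w)) :
    Set.range τ₁ ⊆ Set.range τ₂ := by
  have he' : ∀ (g : W) (w : V₂ → ℂ), e.symm (ρ₂ g w) = ρ₁ g (e.symm w) := by
    intro g w
    apply e.injective
    rw [e.apply_symm_apply, he, e.apply_symm_apply]
  rintro T ⟨v₀, hv₀⟩
  by_contra hno
  have hno' : ∀ v : V₂, τ₂ v ≠ T := fun v h => hno ⟨v, h⟩
  set w : V₂ → ℂ := e (Pi.single v₀ 1) with hwdef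
  -- w is a (-1)-eigenvector of all simple reflections indexed by T
  have hweig : ∀ i ∈ T, ρ₂ (cs.simple i) w = -w := by
    intro i hi
    have h1 : ρ₁ (cs.simple i) (Pi.single v₀ 1) = -(Pi.single v₀ 1) := by
      rw [hρ₁ i v₀, if_pos (hv₀ ▸ hi)]
    calc ρ₂ (cs.simple i) w = e (ρ₁ (cs.simple i) (Pi.single v₀ 1)) := (he _ _).symm
      _ = -w := by rw [h1, map_neg]
  have hsupp : ∀ v : V₂, w v ≠ 0 → T ⊆ τ₂ v := by
    intro v hv i hi
    by_contra hiv
    exact hv (((eigchar cs m₂ τ₂ ρ₂ hρ₂ i w).mp (hweig i hi)) v hiv)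
  -- the sup of the bigger eigenspaces
  set G₁ : Submodule ℂ (V₁ → ℂ) := ⨆ (i : B) (_ : i ∉ T), Fsp τ₁ (insert i T) with hG₁
  set G₂ : Submodule ℂ (V₂ → ℂ) := ⨆ (i : B) (_ : i ∉ T), Fsp τ₂ (insert i T) with hG₂
  have hwG₂ : w ∈ G₂ := by
    have hdecomp : w = ∑ v : V₂, Pi.single v (w v) := (Finset.univ_sum_single w).symm
    rw [hdecomp]
    apply Submodule.sum_mem
    intro v _
    by_cases hv : w v = 0
    · rw [hv, Pi.single_zero]; exact Submodule.zero_mem _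
    · have hss : T ⊂ τ₂ v := lt_of_le_of_ne (hsupp v hv) (fun h => hno' v h.symm)
      obtain ⟨i, hiv, hiT⟩ := Finset.exists_of_ssubset hss
      have hmem : (Pi.single v (w v) : V₂ → ℂ) ∈ Fsp τ₂ (insert i T) := by
        intro v' hv'
        have hne : v' ≠ v := by
          intro h
          rw [h] at hv'
          exact hv' (Finset.insert_subset hiv (hsupp v hv))
        exact Pi.single_eq_of_ne hne _
      exact Submodule.mem_iSup_of_mem i (Submodule.mem_iSup_of_mem hiT hmem)
  -- e.symm carries G₂ into G₁
  have hGle : G₂ ≤ Submodule.comap (e.symm : (V₂ → ℂ) →ₗ[ℂ] (V₁ → ℂ)) G₁ := by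
    refine iSup_le fun i => iSup_le fun hiT => ?_
    intro u hu
    have heig : ∀ j ∈ insert i T, ρ₂ (cs.simple j) u = -u := by
      intro j hj
      apply (eigchar cs m₂ τ₂ ρ₂ hρ₂ j u).mpr
      intro v hjv
      exact hu v (fun hsub => hjv (hsub hj))
    have heig' : ∀ j ∈ insert i T, ρ₁ (cs.simple j) (e.symm u) = -(e.symm u) := by
      intro j hj
      rw [← he', heig j hj, map_neg]
    have hmem : (e.symm u : V₁ → ℂ) ∈ Fsp τ₁ (insert i T) := by
      intro v hv
      obtain ⟨j, hj, hjv⟩ := Finset.not_subset.mp hv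
      exact ((eigchar cs m₁ τ₁ ρ₁ hρ₁ j (e.symm u)).mp (heig' j hj)) v hjv
    exact Submodule.mem_iSup_of_mem i (Submodule.mem_iSup_of_mem hiT hmem)
  -- but every element of G₁ vanishes at v₀
  have hvanish : ∀ u ∈ G₁, u v₀ = 0 := by
    have : G₁ ≤ LinearMap.ker (LinearMap.proj (R := ℂ) (φ := fun _ : V₁ => ℂ) v₀) := by
      refine iSup_le fun i => iSup_le fun hiT => ?_
      intro u hu
      have : ¬ insert i T ⊆ τ₁ v₀ := by
        rw [hv₀]
        intro h
        exact hiT (h (Finset.mem_insert_self i T))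
      exact hu v₀ this
    intro u hu
    exact this hu
  have h1 : (Pi.single v₀ 1 : V₁ → ℂ) v₀ = 0 := by
    have := hvanish (e.symm w) (hGle hwG₂)
    rwa [hwdef, e.symm_apply_apply] at this
  simp at h1

end WGraphAux

/-- if two weak W-graphs `Γ₁ = (V₁, m₁, τ₁)` and `Γ₂ = (V₂, m₂, τ₂)` for the
same finite Coxeter system have isomorphic associated representations, then they have the
same τ-invariant: `{τ₁(v) : v ∈ V₁} = {τ₂(v) : v ∈ V₂}`. -/
theorem weak_W_graph_tau_invariant {B W V₁ V₂ : Type*} [Group W] [Finite W]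
    [Fintype V₁] [DecidableEq V₁] [Fintype V₂] [DecidableEq V₂] [DecidableEq B]
    {M : CoxeterMatrix B} (cs : CoxeterSystem M W)
    (m₁ : V₁ → V₁ → ℂ) (τ₁ : V₁ → Finset B)
    (ρ₁ : Representation ℂ W (V₁ → ℂ))
    (hρ₁ : ∀ (i : B) (v : V₁),
      ρ₁ (cs.simple i) (Pi.single v 1) =
        if i ∈ τ₁ v then -Pi.single v 1
        else Pi.single v 1 - ∑ u : V₁, (if i ∈ τ₁ u then m₁ u v • (Pi.single u 1 : V₁ → ℂ) else 0))
    (m₂ : V₂ → V₂ → ℂ) (τ₂ : V₂ → Finset B)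
    (ρ₂ : Representation ℂ W (V₂ → ℂ))
    (hρ₂ : ∀ (i : B) (v : V₂),
      ρ₂ (cs.simple i) (Pi.single v 1) =
        if i ∈ τ₂ v then -Pi.single v 1
        else Pi.single v 1 - ∑ u : V₂, (if i ∈ τ₂ u then m₂ u v • (Pi.single u 1 : V₂ → ℂ) else 0))
    (e : (V₁ → ℂ) ≃ₗ[ℂ] (V₂ → ℂ))
    (he : ∀ (g : W) (w : V₁ → ℂ), e (ρ₁ g w) = ρ₂ g (e w)) :
    Set.range τ₁ = Set.range τ₂ := by
  have he' : ∀ (g : W) (w : V₂ → ℂ), e.symm (ρ₂ g w) = ρ₁ g (e.symm w) := by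
    intro g w
    apply e.injective
    rw [e.apply_symm_apply, he, e.apply_symm_apply]
  apply Set.Subset.antisymm
  · exact WGraphAux.main_half cs m₁ τ₁ ρ₁ hρ₁ m₂ τ₂ ρ₂ hρ₂ e he
  · exact WGraphAux.main_half cs m₂ τ₂ ρ₂ hρ₂ m₁ τ₁ ρ₁ hρ₁ e.symm he'


end
end
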